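/- Let A be a commutative ring and L a Gabriel filter on A. If A is totally σ-artinian with respect to L, then every finitely generated A-module is totally σ-artinian. -/

import Mathlib

/-- A Gabriel filter on a commutative ring `A`: a set of ideals containing `⊤`,
upward closed, closed under intersections, and satisfying the Gabriel condition. -/
structure IsGabrielFilter {A : Type*} [CommRing A] (L : Set (Ideal A)) : Prop where
  top_mem : ⊤ ∈ L
  mem_of_le : ∀ {a b : Ideal A}, a ∈ L → a ≤ b → b ∈ L
  inf_mem : ∀ {a b : Ideal A}, a ∈ L → b ∈ L → a ⊓ b ∈ L
  gabriel : ∀ b : Ideal A,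
    (∃ a ∈ L, ∀ x ∈ a, Submodule.colon b (Ideal.span {x}) ∈ L) → b ∈ L

/-- An `A`-module `M` is totally σ-artinian w.r.t. `L` if every decreasing chain
of submodules `N₁ ⊇ N₂ ⊇ ⋯` admits `m` and `h ∈ L` with `Nₘ·h ⊆ Nₛ` for all `s ≥ m`. -/
def TotallySigmaArtinian {A : Type*} [CommRing A] (L : Set (Ideal A))
    (M : Type*) [AddCommGroup M] [Module A M] : Prop :=
  ∀ N : ℕ → Submodule A M, Antitone N →
    ∃ m : ℕ, ∃ h ∈ L, ∀ s : ℕ, m ≤ s → h • N m ≤ N s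

/-!
A finitely generated module is a quotient of some `Aⁿ`, and `Aⁿ` is built from copies of `A`
by the split extensions `0 → A → A × Aⁿ → Aⁿ → 0`. It therefore suffices that totally
σ-artinian modules pass to quotients and to extensions. For an extension `M₁ → M → M₂` and a
chain `Nᵢ` in `M`, an ideal `b ∈ L` controlling the image chain gives `b • Nₘ ≤ Nₛ ⊔ (M₁ ⊓ Nₘ)`
by modularity, and an ideal `a ∈ L` controlling the trace on `M₁` kills the second summand, so
`a * b` works; products of ideals stay in `L` by the Gabriel condition.
-/

open Submodule

lemma IsGabrielFilter.mul_mem {A : Type*} [CommRing A] {L : Set (Ideal A)}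
    (hL : IsGabrielFilter L) {a b : Ideal A} (ha : a ∈ L) (hb : b ∈ L) : a * b ∈ L := by
  refine hL.gabriel _ ⟨a, ha, fun x hx => hL.mem_of_le hb fun r hr => ?_⟩
  rw [Ideal.mem_colon_span_singleton, mul_comm r x]
  exact Ideal.mul_mem_mul hx hr

namespace TotallySigmaArtinian

variable {A : Type*} [CommRing A] {L : Set (Ideal A)}
  {M M₁ M₂ : Type*} [AddCommGroup M] [Module A M] [AddCommGroup M₁] [Module A M₁]
  [AddCommGroup M₂] [Module A M₂]

lemma of_surjective (f : M →ₗ[A] M₂) (hf : Function.Surjective f)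
    (hM : TotallySigmaArtinian L M) : TotallySigmaArtinian L M₂ := by
  intro N hN
  obtain ⟨m, h, hh, hle⟩ := hM (fun i => (N i).comap f) fun i j hij => comap_mono (hN hij)
  refine ⟨m, h, hh, fun s hs => ?_⟩
  simpa only [map_smul'', map_comap_eq_of_surjective hf] using map_mono (f := f) (hle s hs)

lemma of_ker_le_range (hL : IsGabrielFilter L) (f : M₁ →ₗ[A] M) (g : M →ₗ[A] M₂)
    (hfg : LinearMap.ker g ≤ LinearMap.range f)
    (h₁ : TotallySigmaArtinian L M₁) (h₂ : TotallySigmaArtinian L M₂) :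
    TotallySigmaArtinian L M := by
  intro N hN
  obtain ⟨m₁, a, ha, hsub⟩ := h₁ (fun i => (N i).comap f) fun i j hij => comap_mono (hN hij)
  obtain ⟨m₂, b, hb, hquot⟩ := h₂ (fun i => (N i).map g) fun i j hij => map_mono (hN hij)
  refine ⟨max m₁ m₂, a * b, hL.mul_mem ha hb, fun s hs => ?_⟩
  set m := max m₁ m₂
  have hb_sup : b • N m ≤ N s ⊔ LinearMap.range f := by
    have hmap : (b • N m).map g ≤ (N s).map g := by
      rw [map_smul'']
      exact (smul_mono le_rfl (map_mono (hN (le_max_right m₁ m₂)))).trans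
        (hquot s (le_of_max_le_right hs))
    calc b • N m ≤ ((b • N m).map g).comap g := le_comap_map g _
      _ ≤ ((N s).map g).comap g := comap_mono hmap
      _ = N s ⊔ LinearMap.ker g := comap_map_eq g _
      _ ≤ N s ⊔ LinearMap.range f := sup_le_sup_left hfg _
  have hb_mod : b • N m ≤ N s ⊔ (LinearMap.range f ⊓ N m) := by
    rw [← sup_inf_assoc_of_le _ (hN hs)]
    exact le_inf hb_sup smul_le_right
  have ha_range : a • (LinearMap.range f ⊓ N m) ≤ N s := by
    rw [← map_comap_eq, ← map_smul'']
    exact (map_mono ((smul_mono le_rfl (comap_mono (hN (le_max_left m₁ m₂)))).trans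
      (hsub s (le_of_max_le_left hs)))).trans (map_comap_le f _)
  calc (a * b) • N m = a • b • N m := mul_smul a b (N m)
    _ ≤ a • (N s ⊔ (LinearMap.range f ⊓ N m)) := smul_mono le_rfl hb_mod
    _ = a • N s ⊔ a • (LinearMap.range f ⊓ N m) := smul_sup a _ _
    _ ≤ N s := sup_le smul_le_right ha_range

lemma prod (hL : IsGabrielFilter L) (h₁ : TotallySigmaArtinian L M₁)
    (h₂ : TotallySigmaArtinian L M₂) : TotallySigmaArtinian L (M₁ × M₂) :=
  of_ker_le_range hL (LinearMap.inl A M₁ M₂) (LinearMap.snd A M₁ M₂)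
    (LinearMap.ker_snd A M₁ M₂).le h₁ h₂

lemma pi_fin (hL : IsGabrielFilter L) (hM : TotallySigmaArtinian L M) :
    ∀ n : ℕ, TotallySigmaArtinian L (Fin n → M)
  | 0 => hM.of_surjective 0 (Function.surjective_to_subsingleton _)
  | n + 1 => ((hM.prod hL (pi_fin hL hM n)).of_surjective
      (Fin.consLinearEquiv A fun _ => M).toLinearMap (LinearEquiv.surjective _))

end TotallySigmaArtinian

theorem totallySigmaArtinian_of_finite_module
    {A : Type*} [CommRing A] (L : Set (Ideal A)) (hL : IsGabrielFilter L)
    (hA : TotallySigmaArtinian L A)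
    (M : Type*) [AddCommGroup M] [Module A M] [Module.Finite A M] :
    TotallySigmaArtinian L M := by
  obtain ⟨n, f, hf⟩ := Module.Finite.exists_fin' A M
  exact (hA.pi_fin hL n).of_surjective f hf
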